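/- Let n ≥ 1 and let r, r' ≤ n. Let α, β : Fin n → ℝ with α(j) > 0 and β(j) > 0 for all j. Suppose that for every t ∈ ℝ, (∏_{j<r} sinh(α(j)·t)) · (∏_{r ≤ j<n} sin(α(j)·t)) = (∏_{j<r'} sinh(β(j)·t)) · (∏_{r' ≤ j<n} sin(β(j)·t)). Then r = r', the multiset {α(j) : j < r} equals the multiset {β(j) : j < r'}, and the multiset {α(j) : r ≤ j < n} equals the multiset {β(j) : r' ≤ j < n}. -/

import Mathlib

/-!
The elliptic frequencies are read off from the zeros. If `M` is the largest elliptic frequency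
occurring on either side, then `t = π / M` is a zero of that side, hence of the other one; the
hyperbolic factors do not vanish for `t > 0`, and `sin (b π / M) = 0` with `0 < b ≤ M` forces
`b = M`, so `sin (M t)` is a factor of both sides. Cancelling it on the dense set where it does not
vanish and extending by continuity, induction on the number of factors finishes.

For the hyperbolic frequencies, both sides extend to entire functions of `t` that agree on `ℝ`,
hence on `ℂ`. Evaluating at `t = s i` turns `sinh (a s i) = i sin (a s)` and
`sin (a s i) = i sinh (a s)`, which exchanges the two families, and the elliptic case applies again.
-/

open Filter Topology Real

theorem Multiset.differentiable_prod_map {ι 𝕜 : Type*} [NontriviallyNormedField 𝕜]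
    (s : Multiset ι) {f : ι → 𝕜 → 𝕜} (hf : ∀ i ∈ s, Differentiable 𝕜 (f i)) :
    Differentiable 𝕜 fun z => (s.map fun i => f i z).prod := by
  induction s using Multiset.induction with
  | empty => simp
  | cons i s ih =>
    simp only [Multiset.map_cons, Multiset.prod_cons]
    exact (hf i (s.mem_cons_self i)).mul (ih fun j hj => hf j (Multiset.mem_cons_of_mem hj))

noncomputable section

def sinhSinProd (H E : Multiset ℝ) (t : ℝ) : ℝ :=
  (H.map fun a => sinh (a * t)).prod * (E.map fun a => sin (a * t)).prod

def complexSinhSinProd (H E : Multiset ℝ) (z : ℂ) : ℂ :=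
  (H.map fun a : ℝ => Complex.sinh (a * z)).prod * (E.map fun a : ℝ => Complex.sin (a * z)).prod

end

theorem differentiable_complexSinhSinProd (H E : Multiset ℝ) :
    Differentiable ℂ (complexSinhSinProd H E) :=
  (H.differentiable_prod_map fun _ _ => by fun_prop).mul
    (E.differentiable_prod_map fun _ _ => by fun_prop)

theorem complexSinhSinProd_ofReal (H E : Multiset ℝ) (t : ℝ) :
    complexSinhSinProd H E t = sinhSinProd H E t := by
  have ofReal_prod (S : Multiset ℝ) : ((S.prod : ℝ) : ℂ) = (S.map (↑)).prod :=
    map_multiset_prod Complex.ofRealHom S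
  simp [complexSinhSinProd, sinhSinProd, ofReal_prod, Multiset.map_map]

theorem complexSinhSinProd_mul_I (H E : Multiset ℝ) (s : ℝ) :
    complexSinhSinProd H E (s * Complex.I) =
      Complex.I ^ (Multiset.card H + Multiset.card E) * sinhSinProd E H s := by
  simp only [complexSinhSinProd, ← mul_assoc, Complex.sinh_mul_I, Complex.sin_mul_I,
    Multiset.prod_map_mul, ← complexSinhSinProd_ofReal]
  simp only [Multiset.map_const', Multiset.prod_replicate]
  ring

theorem complexSinhSinProd_eq_of_sinhSinProd_eq {H E H' E' : Multiset ℝ}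
    (h : sinhSinProd H E = sinhSinProd H' E') :
    complexSinhSinProd H E = complexSinhSinProd H' E' := by
  refine AnalyticOnNhd.eq_of_frequently_eq (z₀ := 0)
    (fun z _ => (differentiable_complexSinhSinProd H E).analyticAt z)
    (fun z _ => (differentiable_complexSinhSinProd H' E').analyticAt z) ?_
  have hreal : Tendsto ((↑) : ℝ → ℂ) (𝓝[≠] 0) (𝓝[≠] 0) :=
    tendsto_nhdsWithin_of_tendsto_nhds_of_eventually_within _
      (Complex.continuous_ofReal.tendsto' 0 0 Complex.ofReal_zero |>.mono_left nhdsWithin_le_nhds)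
      (eventually_mem_nhdsWithin.mono fun t ht => Complex.ofReal_ne_zero.2 ht)
  exact hreal.frequently (Frequently.of_forall fun t => by
    simp only [complexSinhSinProd_ofReal, h])

theorem sinhSinProd_swap_eq_of_eq {H E H' E' : Multiset ℝ}
    (hcard : Multiset.card H + Multiset.card E = Multiset.card H' + Multiset.card E')
    (h : sinhSinProd H E = sinhSinProd H' E') : sinhSinProd E H = sinhSinProd E' H' := by
  funext s
  have := congrFun (complexSinhSinProd_eq_of_sinhSinProd_eq h) (s * Complex.I)
  rw [complexSinhSinProd_mul_I, complexSinhSinProd_mul_I, hcard] at this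
  exact_mod_cast mul_left_cancel₀ (pow_ne_zero _ Complex.I_ne_zero) this

theorem eq_of_le_of_sin_mul_pi_div_eq_zero {a M : ℝ} (ha : 0 < a) (haM : a ≤ M)
    (h : sin (a * (π / M)) = 0) : a = M := by
  have hM : 0 < M := ha.trans_le haM
  obtain ⟨k, hk⟩ := Real.sin_eq_zero_iff.1 h
  have hak : a = k * M := by
    field_simp at hk
    nlinarith [pi_pos]
  have hk : k = 1 := by
    have : 0 < k ∧ k ≤ 1 := ⟨by exact_mod_cast (show (0 : ℝ) < k by nlinarith),
      by exact_mod_cast (show (k : ℝ) ≤ 1 by nlinarith)⟩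
    omega
  rw [hak, hk, Int.cast_one, one_mul]

theorem Multiset.prod_map_sin_mul_pi_div_eq_zero_iff {E : Multiset ℝ} {M : ℝ}
    (hE : ∀ a ∈ E, 0 < a ∧ a ≤ M) :
    (E.map fun a => sin (a * (π / M))).prod = 0 ↔ M ∈ E := by
  rw [Multiset.prod_eq_zero_iff, Multiset.mem_map]
  constructor
  · rintro ⟨a, ha, hsin⟩
    rwa [← eq_of_le_of_sin_mul_pi_div_eq_zero (hE a ha).1 (hE a ha).2 hsin]
  · intro hM
    refine ⟨M, hM, ?_⟩
    rw [mul_div_cancel₀ _ (hE M hM).1.ne', sin_pi]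

theorem eq_of_sin_mul_eq_sin_mul {f g : ℝ → ℝ} (hf : Continuous f) (hg : Continuous g) {M : ℝ}
    (hM : M ≠ 0) (h : ∀ t, sin (M * t) * f t = sin (M * t) * g t) : f = g := by
  have hzeros : {t | sin (M * t) = 0}.Countable := by
    refine (Set.countable_range fun k : ℤ => k * π / M).mono fun t ht => ?_
    obtain ⟨k, hk⟩ := Real.sin_eq_zero_iff.1 ht
    exact ⟨k, by field_simp; linarith⟩
  exact Continuous.ext_on (hzeros.dense_compl ℝ) hf hg fun t ht => mul_left_cancel₀ ht (h t)

theorem Multiset.eq_of_mul_prod_map_sin_eq {G G' : ℝ → ℝ} (hG : Continuous G)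
    (hG' : Continuous G') (hG0 : ∀ t, 0 < t → G t ≠ 0) (hG0' : ∀ t, 0 < t → G' t ≠ 0)
    {E E' : Multiset ℝ} (hE : ∀ a ∈ E, 0 < a) (hE' : ∀ a ∈ E', 0 < a)
    (h : ∀ t, G t * (E.map fun a => sin (a * t)).prod =
      G' t * (E'.map fun a => sin (a * t)).prod) :
    E = E' := by
  induction E using Multiset.strongInductionOn generalizing E' with
  | ih E ih =>
  rcases eq_or_ne (E + E') 0 with hzero | hne
  · obtain ⟨rfl, rfl⟩ := add_eq_zero.1 hzero
    rfl
  obtain ⟨M, hM, hMmax⟩ := (E + E').exists_max_image id hne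
  have hMpos : 0 < M := by
    rcases Multiset.mem_add.1 hM with hM | hM
    exacts [hE M hM, hE' M hM]
  have hbound {F : Multiset ℝ} (hF : ∀ a ∈ F, 0 < a) (hFE : F ≤ E + E') :
      ∀ a ∈ F, 0 < a ∧ a ≤ M := fun a ha => ⟨hF a ha, hMmax a (Multiset.mem_of_le hFE ha)⟩
  have hM_iff : M ∈ E ↔ M ∈ E' := by
    have hπM : 0 < π / M := by positivity
    rw [← Multiset.prod_map_sin_mul_pi_div_eq_zero_iff (hbound hE (Multiset.le_add_right _ _)),
      ← Multiset.prod_map_sin_mul_pi_div_eq_zero_iff (hbound hE' (Multiset.le_add_left _ _)),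
      ← mul_eq_zero_iff_left (hG0 _ hπM), h, mul_eq_zero_iff_left (hG0' _ hπM)]
  have hME : M ∈ E ∧ M ∈ E' := by
    rcases Multiset.mem_add.1 hM with hM | hM
    exacts [⟨hM, hM_iff.1 hM⟩, ⟨hM_iff.2 hM, hM⟩]
  obtain ⟨E₀, rfl⟩ := Multiset.exists_cons_of_mem hME.1
  obtain ⟨E₀', rfl⟩ := Multiset.exists_cons_of_mem hME.2
  have hcancel := eq_of_sin_mul_eq_sin_mul (M := M)
    (f := fun t => G t * (E₀.map fun a => sin (a * t)).prod)
    (g := fun t => G' t * (E₀'.map fun a => sin (a * t)).prod)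
    (hG.mul (continuous_multiset_prod _ fun _ _ => by fun_prop))
    (hG'.mul (continuous_multiset_prod _ fun _ _ => by fun_prop)) hMpos.ne' fun t => by
      have := h t
      simp only [Multiset.map_cons, Multiset.prod_cons] at this
      linear_combination this
  rw [ih E₀ (Multiset.lt_cons_self E₀ M) (fun a ha => hE a (Multiset.mem_cons_of_mem ha))
    (fun a ha => hE' a (Multiset.mem_cons_of_mem ha)) (congrFun hcancel)]

theorem Multiset.prod_map_sinh_mul_pos {H : Multiset ℝ} (hH : ∀ a ∈ H, 0 < a) {t : ℝ}
    (ht : 0 < t) : 0 < (H.map fun a => sinh (a * t)).prod :=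
  Multiset.prod_pos <| Multiset.forall_mem_map_iff.2 fun a ha => sinh_pos_iff.2 (mul_pos (hH a ha) ht)

theorem eq_right_of_sinhSinProd_eq {H E H' E' : Multiset ℝ} (hH : ∀ a ∈ H, 0 < a)
    (hE : ∀ a ∈ E, 0 < a) (hH' : ∀ a ∈ H', 0 < a) (hE' : ∀ a ∈ E', 0 < a)
    (h : sinhSinProd H E = sinhSinProd H' E') : E = E' :=
  Multiset.eq_of_mul_prod_map_sin_eq (continuous_multiset_prod _ fun _ _ => by fun_prop)
    (continuous_multiset_prod _ fun _ _ => by fun_prop)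
    (fun _ ht => (Multiset.prod_map_sinh_mul_pos hH ht).ne')
    (fun _ ht => (Multiset.prod_map_sinh_mul_pos hH' ht).ne') hE hE' (congrFun h)

theorem eq_of_sinhSinProd_eq {H E H' E' : Multiset ℝ} (hH : ∀ a ∈ H, 0 < a)
    (hE : ∀ a ∈ E, 0 < a) (hH' : ∀ a ∈ H', 0 < a) (hE' : ∀ a ∈ E', 0 < a)
    (hcard : Multiset.card H + Multiset.card E = Multiset.card H' + Multiset.card E')
    (h : sinhSinProd H E = sinhSinProd H' E') : H = H' ∧ E = E' :=
  ⟨eq_right_of_sinhSinProd_eq hE hH hE' hH' (sinhSinProd_swap_eq_of_eq hcard h),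
    eq_right_of_sinhSinProd_eq hH hE hH' hE' h⟩

theorem sinh_sin_product_rigidity_general
    (n : ℕ) (r r' : ℕ) (hr : r ≤ n) (hr' : r' ≤ n)
    (α β : Fin n → ℝ) (hα : ∀ j, 0 < α j) (hβ : ∀ j, 0 < β j)
    (h : ∀ t : ℝ,
      (∏ j ∈ Finset.univ.filter (fun j : Fin n => (j : ℕ) < r),
          Real.sinh (α j * t)) *
      (∏ j ∈ Finset.univ.filter (fun j : Fin n => r ≤ (j : ℕ)),
          Real.sin (α j * t)) =
      (∏ j ∈ Finset.univ.filter (fun j : Fin n => (j : ℕ) < r'),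
          Real.sinh (β j * t)) *
      (∏ j ∈ Finset.univ.filter (fun j : Fin n => r' ≤ (j : ℕ)),
          Real.sin (β j * t))) :
    r = r' ∧
    (Finset.univ.filter (fun j : Fin n => (j : ℕ) < r)).val.map α =
      (Finset.univ.filter (fun j : Fin n => (j : ℕ) < r')).val.map β ∧
    (Finset.univ.filter (fun j : Fin n => r ≤ (j : ℕ))).val.map α =
      (Finset.univ.filter (fun j : Fin n => r' ≤ (j : ℕ))).val.map β := by
  have hpos {γ : Fin n → ℝ} (hγ : ∀ j, 0 < γ j) (s : Finset (Fin n)) :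
      ∀ a ∈ s.val.map γ, 0 < a :=
    Multiset.forall_mem_map_iff.2 fun j _ => hγ j
  have hcard (γ : Fin n → ℝ) (m : ℕ) :
      Multiset.card ((Finset.univ.filter (fun j : Fin n => (j : ℕ) < m)).val.map γ) +
        Multiset.card ((Finset.univ.filter (fun j : Fin n => m ≤ (j : ℕ))).val.map γ) = n := by
    simp_rw [Multiset.card_map, ← Finset.card_def, ← not_lt,
      Finset.card_filter_add_card_filter_not, Finset.card_univ, Fintype.card_fin]
  obtain ⟨hH, hE⟩ := eq_of_sinhSinProd_eq (hpos hα _) (hpos hα _) (hpos hβ _) (hpos hβ _)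
    ((hcard α r).trans (hcard β r').symm) <| funext fun t => by
      simpa only [sinhSinProd, Multiset.map_map, Function.comp_def,
        ← Finset.prod_eq_multiset_prod] using h t
  refine ⟨?_, hH, hE⟩
  have hcardH := congrArg Multiset.card hH
  rwa [Multiset.card_map, Multiset.card_map, ← Finset.card_def, ← Finset.card_def,
    Fin.card_filter_val_lt, Fin.card_filter_val_lt, min_eq_right hr, min_eq_right hr'] at hcardH

/-- Uniqueness for products of hyperbolic and trigonometric sines: if
`∏_{j<r} sinh(αⱼ t) ∏_{r≤j<n} sin(αⱼ t) = ∏_{j<r'} sinh(βⱼ t) ∏_{r'≤j<n} sin(βⱼ t)`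
for all `t`, with all `αⱼ, βⱼ > 0`, then `r = r'` and the multisets of hyperbolic
frequencies and the multisets of elliptic frequencies agree. -/
theorem sinh_sin_product_rigidity
    (n : ℕ) (hn : 1 ≤ n) (r r' : ℕ) (hr : r ≤ n) (hr' : r' ≤ n)
    (α β : Fin n → ℝ) (hα : ∀ j, 0 < α j) (hβ : ∀ j, 0 < β j)
    (h : ∀ t : ℝ,
      (∏ j ∈ Finset.univ.filter (fun j : Fin n => (j : ℕ) < r),
          Real.sinh (α j * t)) *
      (∏ j ∈ Finset.univ.filter (fun j : Fin n => r ≤ (j : ℕ)),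
          Real.sin (α j * t)) =
      (∏ j ∈ Finset.univ.filter (fun j : Fin n => (j : ℕ) < r'),
          Real.sinh (β j * t)) *
      (∏ j ∈ Finset.univ.filter (fun j : Fin n => r' ≤ (j : ℕ)),
          Real.sin (β j * t))) :
    r = r' ∧
    (Finset.univ.filter (fun j : Fin n => (j : ℕ) < r)).val.map α =
      (Finset.univ.filter (fun j : Fin n => (j : ℕ) < r')).val.map β ∧
    (Finset.univ.filter (fun j : Fin n => r ≤ (j : ℕ))).val.map α =
      (Finset.univ.filter (fun j : Fin n => r' ≤ (j : ℕ))).val.map β :=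
  sinh_sin_product_rigidity_general n r r' hr hr' α β hα hβ h
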